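/- arXiv:1204.2654 — 7 statements merged into one kernel-verified Lean document; each statement's English description precedes it below -/
import Mathlib

section
/- Let V be a complex inner product space, Ω ∈ V, and Θ : V → V an additive bijection which is antiunitary, i.e. Θ(c•v) = conj(c)•Θ(v) for all c ∈ ℂ, v ∈ V, and ⟨Θu, Θv⟩ = conj⟨u, v⟩ for all u, v ∈ V; assume ΘΩ = Ω. Let Φ, Φᶜ : ℝ⁴ → End_ℂ(V) be two families of ℂ-linear endomorphisms satisfying Θ ∘ Φ(x) = Φᶜ(−x) ∘ Θ for every x ∈ ℝ⁴. Let (N_n)_{n≥0} and (Nᶜ_n)_{n≥0}, with N_n, Nᶜ_n : (ℝ⁴)ⁿ → End_ℂ(V), be the normally ordered products defined by the Wick recursion: N₀ = id, N₁(x) = Φ(x), and for n ≥ 2, N_n(x₁,…,x_n) = N_{n−1}(x₁,…,x_{n−1}) ∘ Φ(x_n) − Σ_{l=1}^{n−1} ⟨Ω, Φ(x_l)(Φ(x_n)(Ω))⟩ • N_{n−2}(x₁,…,x̂_l,…,x_{n−1}) (the hat meaning that the argument x_l is omitted), and Nᶜ_n satisfies the identical recursion with Φ replaced everywhere by Φᶜ.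 Then for every n ≥ 0 and all x₁,…,x_n ∈ ℝ⁴ one has Θ ∘ N_n(x₁,…,x_n) = Nᶜ_n(−x₁,…,−x_n) ∘ Θ (normal ordering commutes with the PCT transformation). -/
/-!
Induction along the Wick recursion, two steps at a time. The antiunitary `Θ` is additive and
conjugate-linear, so it passes through the difference, the sum and the scalars of the recursion
step; it turns each coefficient `⟨Ω, Φ(x_l) Φ(x_n) Ω⟩` into its complex conjugate, which by
covariance and `ΘΩ = Ω` is exactly the coefficient `⟨Ω, Φᶜ(-x_l) Φᶜ(-x_n) Ω⟩` of the recursion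
for `Nᶜ`.
-/

open scoped InnerProductSpace

section NormalOrdering

variable {V X : Type*} [NormedAddCommGroup V] [InnerProductSpace ℂ V]

structure IsNormalOrdering (Ω : V) (Φ : X → Module.End ℂ V)
    (N : (n : ℕ) → (Fin n → X) → Module.End ℂ V) : Prop where
  zero : ∀ x, N 0 x = 1
  one : ∀ x, N 1 x = Φ (x 0)
  succ_succ : ∀ (n : ℕ) (x : Fin (n + 2) → X),
    N (n + 2) x =
      N (n + 1) (fun i => x i.castSucc) * Φ (x (Fin.last (n + 1)))
        - ∑ l : Fin (n + 1),
            ⟪Ω, Φ (x l.castSucc) (Φ (x (Fin.last (n + 1))) Ω)⟫_ℂ •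
              N n (fun i => x (l.succAbove i).castSucc)

variable {Ω : V} {Θ : V →ₗ⋆[ℂ] V} {Φ Φc : X → Module.End ℂ V} {σ : X → X}

theorem conj_inner_vacuum_two_point
    (hΘinner : ∀ u v : V, ⟪Θ u, Θ v⟫_ℂ = starRingEnd ℂ ⟪u, v⟫_ℂ) (hΘΩ : Θ Ω = Ω)
    (hcov : ∀ x v, Θ (Φ x v) = Φc (σ x) (Θ v)) (a b : X) :
    starRingEnd ℂ ⟪Ω, Φ a (Φ b Ω)⟫_ℂ = ⟪Ω, Φc (σ a) (Φc (σ b) Ω)⟫_ℂ := by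
  rw [← hΘinner, hΘΩ, hcov, hcov, hΘΩ]

theorem IsNormalOrdering.antiunitary_intertwine
    {N Nc : (n : ℕ) → (Fin n → X) → Module.End ℂ V}
    (hN : IsNormalOrdering Ω Φ N) (hNc : IsNormalOrdering Ω Φc Nc)
    (hΘinner : ∀ u v : V, ⟪Θ u, Θ v⟫_ℂ = starRingEnd ℂ ⟪u, v⟫_ℂ) (hΘΩ : Θ Ω = Ω)
    (hcov : ∀ x v, Θ (Φ x v) = Φc (σ x) (Θ v)) :
    ∀ (n : ℕ) (x : Fin n → X) (v : V), Θ (N n x v) = Nc n (σ ∘ x) (Θ v) := by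
  intro n
  induction n using Nat.twoStepInduction with
  | zero => intro x v; simp [hN.zero, hNc.zero]
  | one => intro x v; simp [hN.one, hNc.one, hcov]
  | more n ih ih' =>
    intro x v
    simp only [hN.succ_succ, hNc.succ_succ, LinearMap.sub_apply, Module.End.mul_apply,
      LinearMap.sum_apply, LinearMap.smul_apply, map_sub, map_sum, map_smulₛₗ,
      ih, ih', hcov, conj_inner_vacuum_two_point hΘinner hΘΩ hcov]
    rfl

end NormalOrdering

theorem pct_commutes_with_normal_ordering_general
    {V : Type*} [NormedAddCommGroup V] [InnerProductSpace ℂ V]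
    (Ω : V) (Θ : V → V)
    (hΘadd : ∀ u v : V, Θ (u + v) = Θ u + Θ v)
    (hΘsmul : ∀ (c : ℂ) (v : V), Θ (c • v) = (starRingEnd ℂ c) • Θ v)
    (hΘinner : ∀ u v : V, (inner ℂ (Θ u) (Θ v) : ℂ) = starRingEnd ℂ (inner ℂ u v : ℂ))
    (hΘΩ : Θ Ω = Ω)
    (Φ Φc : (Fin 4 → ℝ) → Module.End ℂ V)
    (hcov : ∀ (x : Fin 4 → ℝ) (v : V), Θ (Φ x v) = Φc (-x) (Θ v))
    (N Nc : (n : ℕ) → (Fin n → (Fin 4 → ℝ)) → Module.End ℂ V)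
    (hN0 : ∀ x : Fin 0 → (Fin 4 → ℝ), N 0 x = 1)
    (hN1 : ∀ x : Fin 1 → (Fin 4 → ℝ), N 1 x = Φ (x 0))
    (hNrec : ∀ (n : ℕ) (x : Fin (n + 2) → (Fin 4 → ℝ)),
      N (n + 2) x =
        N (n + 1) (fun i => x i.castSucc) * Φ (x (Fin.last (n + 1)))
          - ∑ l : Fin (n + 1),
              (inner ℂ Ω (Φ (x l.castSucc) (Φ (x (Fin.last (n + 1))) Ω)) : ℂ) •
                N n (fun i => x (l.succAbove i).castSucc))
    (hNc0 : ∀ x : Fin 0 → (Fin 4 → ℝ), Nc 0 x = 1)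
    (hNc1 : ∀ x : Fin 1 → (Fin 4 → ℝ), Nc 1 x = Φc (x 0))
    (hNcrec : ∀ (n : ℕ) (x : Fin (n + 2) → (Fin 4 → ℝ)),
      Nc (n + 2) x =
        Nc (n + 1) (fun i => x i.castSucc) * Φc (x (Fin.last (n + 1)))
          - ∑ l : Fin (n + 1),
              (inner ℂ Ω (Φc (x l.castSucc) (Φc (x (Fin.last (n + 1))) Ω)) : ℂ) •
                Nc n (fun i => x (l.succAbove i).castSucc)) :
    ∀ (n : ℕ) (x : Fin n → (Fin 4 → ℝ)) (v : V),
      Θ (N n x v) = Nc n (fun i => -(x i)) (Θ v) := by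
  let Θₗ : V →ₗ⋆[ℂ] V := { toFun := Θ, map_add' := hΘadd, map_smul' := hΘsmul }
  exact IsNormalOrdering.antiunitary_intertwine (Θ := Θₗ) ⟨hN0, hN1, hNrec⟩ ⟨hNc0, hNc1, hNcrec⟩
    hΘinner hΘΩ hcov

/-- **PCT covariance of normally ordered products.**
If `Θ` is an antiunitary (additive, bijective, conjugate-linear, inner-product
conjugating) operator on a complex inner product space `V` fixing the vacuum `Ω`,
and `Φ, Φᶜ` are families of endomorphisms with `Θ ∘ Φ(x) = Φᶜ(-x) ∘ Θ`, then the
normally ordered products `N_n`, `Nᶜ_n` defined by the Wick recursion satisfy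
`Θ ∘ N_n(x₁,…,x_n) = Nᶜ_n(-x₁,…,-x_n) ∘ Θ`. -/
theorem pct_commutes_with_normal_ordering
    {V : Type*} [NormedAddCommGroup V] [InnerProductSpace ℂ V]
    (Ω : V) (Θ : V → V)
    (hΘadd : ∀ u v : V, Θ (u + v) = Θ u + Θ v)
    (hΘbij : Function.Bijective Θ)
    (hΘsmul : ∀ (c : ℂ) (v : V), Θ (c • v) = (starRingEnd ℂ c) • Θ v)
    (hΘinner : ∀ u v : V, (inner ℂ (Θ u) (Θ v) : ℂ) = starRingEnd ℂ (inner ℂ u v : ℂ))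
    (hΘΩ : Θ Ω = Ω)
    (Φ Φc : (Fin 4 → ℝ) → Module.End ℂ V)
    (hcov : ∀ (x : Fin 4 → ℝ) (v : V), Θ (Φ x v) = Φc (-x) (Θ v))
    (N Nc : (n : ℕ) → (Fin n → (Fin 4 → ℝ)) → Module.End ℂ V)
    (hN0 : ∀ x : Fin 0 → (Fin 4 → ℝ), N 0 x = 1)
    (hN1 : ∀ x : Fin 1 → (Fin 4 → ℝ), N 1 x = Φ (x 0))
    (hNrec : ∀ (n : ℕ) (x : Fin (n + 2) → (Fin 4 → ℝ)),
      N (n + 2) x =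
        N (n + 1) (fun i => x i.castSucc) * Φ (x (Fin.last (n + 1)))
          - ∑ l : Fin (n + 1),
              (inner ℂ Ω (Φ (x l.castSucc) (Φ (x (Fin.last (n + 1))) Ω)) : ℂ) •
                N n (fun i => x (l.succAbove i).castSucc))
    (hNc0 : ∀ x : Fin 0 → (Fin 4 → ℝ), Nc 0 x = 1)
    (hNc1 : ∀ x : Fin 1 → (Fin 4 → ℝ), Nc 1 x = Φc (x 0))
    (hNcrec : ∀ (n : ℕ) (x : Fin (n + 2) → (Fin 4 → ℝ)),
      Nc (n + 2) x =
        Nc (n + 1) (fun i => x i.castSucc) * Φc (x (Fin.last (n + 1)))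
          - ∑ l : Fin (n + 1),
              (inner ℂ Ω (Φc (x l.castSucc) (Φc (x (Fin.last (n + 1))) Ω)) : ℂ) •
                Nc n (fun i => x (l.succAbove i).castSucc)) :
    ∀ (n : ℕ) (x : Fin n → (Fin 4 → ℝ)) (v : V),
      Θ (N n x v) = Nc n (fun i => -(x i)) (Θ v) :=
  pct_commutes_with_normal_ordering_general Ω Θ hΘadd hΘsmul hΘinner hΘΩ Φ Φc hcov N Nc hN0 hN1
    hNrec hNc0 hNc1 hNcrec
end

section
/- Let R be a (possibly noncommutative) ring, ι a type, and T : Finset ι → R with T(∅) = 1. Then there exists a unique function T̄ : Finset ι → R with T̄(∅) = 1 such that for every nonempty finite s ⊆ ι one has Σ_{M ⊆ s} (−1)^{|M|} · T̄(M) * T(s ∖ M) = 0; moreover this unique T̄ automatically also satisfies the opposite-sided relation Σ_{M ⊆ s} (−1)^{|M|} · T(s ∖ M) * T̄(M) = 0 for every nonempty finite s ⊆ ι. -/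
open Finset

namespace AntiAux
variable {R : Type*} {ι : Type*} [Ring R] [DecidableEq ι]

def conv (f g : Finset ι → R) (s : Finset ι) : R :=
  ∑ M ∈ s.powerset, f M * g (s \ M)

def delta (s : Finset ι) : R := if s = ∅ then 1 else 0

lemma conv_delta (f : Finset ι → R) : conv f delta = f := by
  funext s
  rw [conv, Finset.sum_eq_single s]
  · simp [delta]
  · intro M hM hne
    have hsub := mem_powerset.1 hM
    have : s \ M ≠ ∅ := by
      intro h
      exact hne (subset_antisymm hsub (by simpa [sdiff_eq_empty_iff_subset] using h))
    simp [delta, this]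
  · simp

lemma delta_conv (f : Finset ι → R) : conv delta f = f := by
  funext s
  rw [conv, Finset.sum_eq_single ∅]
  · simp [delta]
  · intro M hM hne; simp [delta, hne]
  · simp

lemma conv_assoc (f g h : Finset ι → R) : conv (conv f g) h = conv f (conv g h) := by
  funext s
  simp only [conv, Finset.sum_mul, Finset.mul_sum]
  rw [Finset.sum_sigma', Finset.sum_sigma']
  apply Finset.sum_bij' (i := fun p _ => (⟨p.2, p.1 \ p.2⟩ : Σ _ : Finset ι, Finset ι))
    (j := fun p _ => (⟨p.1 ∪ p.2, p.1⟩ : Σ _ : Finset ι, Finset ι))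
  · rintro ⟨A, B⟩ hp
    simp only [mem_sigma, mem_powerset] at hp ⊢
    exact ⟨hp.2.trans hp.1, sdiff_subset_sdiff hp.1 le_rfl⟩
  · rintro ⟨B, C⟩ hp
    simp only [mem_sigma, mem_powerset] at hp ⊢
    constructor
    · exact union_subset hp.1 (hp.2.trans sdiff_subset)
    · exact subset_union_left
  · rintro ⟨A, B⟩ hp
    simp only [mem_sigma, mem_powerset] at hp
    simp [union_sdiff_of_subset hp.2]
  · rintro ⟨B, C⟩ hp
    simp only [mem_sigma, mem_powerset] at hp
    have hd : Disjoint B C := disjoint_sdiff.mono_right hp.2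
    simp [union_sdiff_cancel_left hd]
  · rintro ⟨A, B⟩ hp
    simp only [mem_sigma, mem_powerset] at hp
    have : (s \ B) \ (A \ B) = s \ A := by
      rw [sdiff_sdiff, sup_eq_union, union_sdiff_of_subset hp.2]
    simp [this, mul_assoc]

noncomputable def linv (T : Finset ι → R) (s : Finset ι) : R :=
  if _h : s = ∅ then 1
  else - ∑ M ∈ (s.powerset.erase s).attach, linv T M.1 * T (s \ M.1)
termination_by s.card
decreasing_by
  have hm := M.2
  rw [mem_erase, mem_powerset] at hm
  exact card_lt_card (lt_of_le_of_ne hm.2 hm.1)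

noncomputable def rinv (T : Finset ι → R) (s : Finset ι) : R :=
  if _h : s = ∅ then 1
  else - ∑ M ∈ (s.powerset.erase ∅).attach, T M.1 * rinv T (s \ M.1)
termination_by s.card
decreasing_by
  have hm := M.2
  rw [mem_erase, mem_powerset] at hm
  exact card_lt_card (sdiff_ssubset hm.2 (nonempty_iff_ne_empty.2 hm.1))

lemma linv_empty (T : Finset ι → R) : linv T ∅ = 1 := by rw [linv]; simp

lemma rinv_empty (T : Finset ι → R) : rinv T ∅ = 1 := by rw [rinv]; simp

lemma linv_eq (T : Finset ι → R) {s : Finset ι} (hs : s ≠ ∅) :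
    linv T s = - ∑ M ∈ s.powerset.erase s, linv T M * T (s \ M) := by
  rw [linv, dif_neg hs, Finset.sum_attach (s.powerset.erase s) (fun M => linv T M * T (s \ M))]

lemma rinv_eq (T : Finset ι → R) {s : Finset ι} (hs : s ≠ ∅) :
    rinv T s = - ∑ M ∈ s.powerset.erase ∅, T M * rinv T (s \ M) := by
  rw [rinv, dif_neg hs, Finset.sum_attach (s.powerset.erase ∅) (fun M => T M * rinv T (s \ M))]

lemma conv_linv (T : Finset ι → R) (hT : T ∅ = 1) : conv (linv T) T = delta := by
  funext s
  rcases eq_or_ne s ∅ with rfl | hs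
  · simp [conv, delta, linv_empty, hT]
  · rw [conv, ← Finset.sum_erase_add _ _ (mem_powerset_self s), sdiff_self, bot_eq_empty, hT,
      mul_one, linv_eq T hs, delta, if_neg hs, add_neg_cancel]

lemma conv_rinv (T : Finset ι → R) (hT : T ∅ = 1) : conv T (rinv T) = delta := by
  funext s
  rcases eq_or_ne s ∅ with rfl | hs
  · simp [conv, delta, rinv_empty, hT]
  · rw [conv, ← Finset.sum_erase_add _ _ (empty_mem_powerset s), sdiff_empty, hT, one_mul,
      rinv_eq T hs, delta, if_neg hs, add_neg_cancel]

lemma linv_eq_rinv (T : Finset ι → R) (hT : T ∅ = 1) : linv T = rinv T := by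
  calc linv T = conv (linv T) (conv T (rinv T)) := by rw [conv_rinv T hT, conv_delta]
    _ = conv (conv (linv T) T) (rinv T) := (conv_assoc _ _ _).symm
    _ = rinv T := by rw [conv_linv T hT, delta_conv]

lemma left_unique (T : Finset ι → R) (hT : T ∅ = 1) (f : Finset ι → R)
    (h0 : f ∅ = 1) (h : ∀ s : Finset ι, s ≠ ∅ → conv f T s = 0) : f = linv T := by
  funext s
  induction s using Finset.strongInduction with
  | _ s ih =>
    rcases eq_or_ne s ∅ with rfl | hs
    · rw [h0, linv_empty]
    · have hc := h s hs
      rw [conv, ← Finset.sum_erase_add _ _ (mem_powerset_self s), sdiff_self, bot_eq_empty, hT,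
        mul_one] at hc
      rw [eq_neg_of_add_eq_zero_right hc, linv_eq T hs, neg_inj]
      refine Finset.sum_congr rfl fun M hM => ?_
      rw [mem_erase, mem_powerset] at hM
      rw [ih M (lt_of_le_of_ne hM.2 hM.1)]


lemma neg_one_pow_mul_self (n : ℕ) : ((-1 : R) ^ n) * ((-1 : R) ^ n) = 1 := by
  rw [← pow_add]; exact Even.neg_one_pow ⟨n, rfl⟩

lemma sign_cancel_left (n : ℕ) (a b : R) :
    (-1 : R) ^ n * ((-1 : R) ^ n * a * b) = a * b := by
  rw [mul_assoc ((-1 : R) ^ n) a b, ← mul_assoc, neg_one_pow_mul_self, one_mul]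

lemma sign_cancel_right (n : ℕ) (a b : R) :
    (-1 : R) ^ n * (a * ((-1 : R) ^ n * b)) = a * b := by
  have hc : Commute ((-1 : R) ^ n) a := (Commute.neg_one_left a).pow_left n
  rw [← mul_assoc, hc.eq, mul_assoc, ← mul_assoc ((-1 : R) ^ n), neg_one_pow_mul_self, one_mul]

lemma key (T : Finset ι → R) (hT : T ∅ = 1) (Tbar : Finset ι → R)
    (h0 : Tbar ∅ = 1)
    (h : ∀ s : Finset ι, s.Nonempty →
      ∑ M ∈ s.powerset, (-1 : R) ^ M.card * (Tbar M * T (s \ M)) = 0) :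
    Tbar = fun M => (-1 : R) ^ M.card * linv T M := by
  have hF : (fun M => (-1 : R) ^ M.card * Tbar M) = linv T := by
    apply left_unique T hT _ (by simp [h0])
    intro s hs
    rw [conv, ← h s (nonempty_iff_ne_empty.2 hs)]
    exact Finset.sum_congr rfl fun M _ => by rw [mul_assoc]
  funext M
  rw [← hF]
  rw [← mul_assoc, neg_one_pow_mul_self, one_mul]

end AntiAux

open AntiAux

/-- **Existence and uniqueness of the antichronological products.** Given
`T : Finset ι → R` with `T ∅ = 1`, there is a unique `Tbar : Finset ι → R` with
`Tbar ∅ = 1` satisfying the left convolution-inverse relation; moreover this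
unique `Tbar` automatically satisfies the right convolution-inverse relation. -/
theorem antichronological_exists_unique
    {R : Type*} {ι : Type*} [Ring R] [DecidableEq ι]
    (T : Finset ι → R) (hT : T ∅ = 1) :
    (∃! Tbar : Finset ι → R, Tbar ∅ = 1 ∧ ∀ s : Finset ι, s.Nonempty →
        ∑ M ∈ s.powerset, (-1 : R) ^ M.card * (Tbar M * T (s \ M)) = 0) ∧
    (∀ Tbar : Finset ι → R,
      (Tbar ∅ = 1 ∧ ∀ s : Finset ι, s.Nonempty →
        ∑ M ∈ s.powerset, (-1 : R) ^ M.card * (Tbar M * T (s \ M)) = 0) →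
      ∀ s : Finset ι, s.Nonempty →
        ∑ M ∈ s.powerset, (-1 : R) ^ M.card * (T (s \ M) * Tbar M) = 0) := by
  constructor
  · refine ⟨fun M => (-1 : R) ^ M.card * linv T M, ⟨by simp [linv_empty], ?_⟩, ?_⟩
    · intro s hs
      have : ∑ M ∈ s.powerset, (-1 : R) ^ M.card *
          ((-1 : R) ^ M.card * linv T M * T (s \ M)) =
          ∑ M ∈ s.powerset, linv T M * T (s \ M) :=
        Finset.sum_congr rfl fun M _ => sign_cancel_left _ _ _
      rw [this]
      have := congrFun (conv_linv T hT) s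
      rw [conv] at this
      rw [this, delta, if_neg (nonempty_iff_ne_empty.1 hs)]
    · intro Tbar ⟨h0, h⟩
      exact key T hT Tbar h0 h
  · intro Tbar ⟨h0, h⟩ s hs
    have hTb := key T hT Tbar h0 h
    have : ∑ M ∈ s.powerset, (-1 : R) ^ M.card * (T (s \ M) * Tbar M) =
        ∑ M ∈ s.powerset, T (s \ M) * rinv T M := by
      refine Finset.sum_congr rfl fun M _ => ?_
      rw [hTb, linv_eq_rinv T hT]
      exact sign_cancel_right _ _ _
    rw [this]
    have hswap : ∑ M ∈ s.powerset, T (s \ M) * rinv T M =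
        ∑ M ∈ s.powerset, T M * rinv T (s \ M) := by
      apply Finset.sum_nbij' (i := fun M => s \ M) (j := fun M => s \ M)
      · intro M hM; exact mem_powerset.2 sdiff_subset
      · intro M hM; exact mem_powerset.2 sdiff_subset
      · intro M hM
        rw [mem_powerset] at hM
        rw [sdiff_sdiff_self_left, inter_eq_right.2 hM]
      · intro M hM
        rw [mem_powerset] at hM
        rw [sdiff_sdiff_self_left, inter_eq_right.2 hM]
      · intro M hM
        rw [mem_powerset] at hM
        rw [sdiff_sdiff_self_left, inter_eq_right.2 hM]
    rw [hswap]
    have := congrFun (conv_rinv T hT) s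
    rw [conv] at this
    rw [this, delta, if_neg (nonempty_iff_ne_empty.1 hs)]
end

section
/- Let R be a ring, ι a type, and x : ι → ℝ⁴ an assignment of spacetime points. Let T, T̄ : Finset ι → R with T(∅) = T̄(∅) = 1 satisfy the mutual inverse relations: for every nonempty finite s ⊆ ι, Σ_{M ⊆ s} (−1)^{|M|} · T̄(M) * T(s ∖ M) = 0 and Σ_{M ⊆ s} (−1)^{|M|} · T(s ∖ M) * T̄(M) = 0. Assume T factorizes causally: for all disjoint finite s₁, s₂ ⊆ ι such that x(i) − x(j) ∉ V̄₋ for all i ∈ s₁ and j ∈ s₂, one has T(s₁ ∪ s₂) = T(s₁) * T(s₂). Then T̄ factorizes antichronologically: for all disjoint finite s₁, s₂ ⊆ ι with x(i) − x(j) ∉ V̄₋ for all i ∈ s₁, j ∈ s₂, one has T̄(s₁ ∪ s₂) = T̄(s₂) * T̄(s₁). -/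
open Finset

/-- The Minkowski quadratic form on `ℝ⁴`, `Q(x) = x₀² − x₁² − x₂² − x₃²`. -/
def Qmink (x : Fin 4 → ℝ) : ℝ := x 0 ^ 2 - x 1 ^ 2 - x 2 ^ 2 - x 3 ^ 2

/-- The closed backward light cone `V̄₋ = {x : x₀ ≤ 0 ∧ Q(x) ≥ 0}`. -/
def backwardCone : Set (Fin 4 → ℝ) := {x | x 0 ≤ 0 ∧ 0 ≤ Qmink x}

/-- Delta lemma: the signed convolution equals 1 on `∅` and 0 otherwise. -/
lemma conv_delta {R : Type*} {ι : Type*} [Ring R] [DecidableEq ι]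
    (T Tbar : Finset ι → R) (hT : T ∅ = 1) (hTbar : Tbar ∅ = 1)
    (hinv1 : ∀ s : Finset ι, s.Nonempty →
      ∑ M ∈ s.powerset, (-1 : R) ^ M.card * (Tbar M * T (s \ M)) = 0)
    (s : Finset ι) :
    ∑ M ∈ s.powerset, (-1 : R) ^ M.card * (Tbar M * T (s \ M)) =
      if s = ∅ then 1 else 0 := by
  rcases eq_or_ne s ∅ with h | h
  · subst h; simp [hT, hTbar]
  · rw [if_neg h]
    exact hinv1 s (Finset.nonempty_iff_ne_empty.mpr h)

/-- Commuting `(-1)^n` to the left. -/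
lemma neg_one_pow_left_comm {R : Type*} [Ring R] (n : ℕ) (r s : R) :
    r * ((-1 : R) ^ n * s) = (-1 : R) ^ n * (r * s) :=
  (((Commute.neg_one_left r).pow_left n).left_comm s).symm

/-- **Antichronological factorization of the inverse products.** If `T` and
`Tbar` are mutually convolution-inverse and `T` factorizes causally with respect
to the spacetime points `x : ι → ℝ⁴`, then `Tbar` factorizes
antichronologically. -/
theorem antichronological_factorization
    {R : Type*} {ι : Type*} [Ring R] [DecidableEq ι]
    (x : ι → (Fin 4 → ℝ)) (T Tbar : Finset ι → R)
    (hT : T ∅ = 1) (hTbar : Tbar ∅ = 1)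
    (hinv1 : ∀ s : Finset ι, s.Nonempty →
      ∑ M ∈ s.powerset, (-1 : R) ^ M.card * (Tbar M * T (s \ M)) = 0)
    (hinv2 : ∀ s : Finset ι, s.Nonempty →
      ∑ M ∈ s.powerset, (-1 : R) ^ M.card * (T (s \ M) * Tbar M) = 0)
    (hcaus : ∀ s₁ s₂ : Finset ι, Disjoint s₁ s₂ →
      (∀ i ∈ s₁, ∀ j ∈ s₂, x i - x j ∉ backwardCone) →
      T (s₁ ∪ s₂) = T s₁ * T s₂) :
    ∀ s₁ s₂ : Finset ι, Disjoint s₁ s₂ →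
      (∀ i ∈ s₁, ∀ j ∈ s₂, x i - x j ∉ backwardCone) →
      Tbar (s₁ ∪ s₂) = Tbar s₂ * Tbar s₁ := by
  intro s₁ s₂ hdisj hc
  suffices h : ∀ s : Finset ι, ∀ a b : Finset ι, a ⊆ s₁ → b ⊆ s₂ → a ∪ b = s →
      Tbar s = Tbar b * Tbar a from
    h (s₁ ∪ s₂) s₁ s₂ le_rfl le_rfl rfl
  intro s
  induction s using Finset.strongInduction with
  | _ s IH =>
    intro a b ha hb hab
    have hdab : Disjoint a b := hdisj.mono ha hb
    rcases eq_or_ne s ∅ with hs | hs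
    · subst hs
      rw [Finset.union_eq_empty] at hab
      rw [hab.1, hab.2, hTbar, one_mul]
    have hne : s.Nonempty := Finset.nonempty_iff_ne_empty.mpr hs
    -- key identity: the antichronological candidate satisfies the same
    -- convolution relation as `Tbar`
    have key : ∑ M ∈ s.powerset,
        (-1 : R) ^ M.card * ((Tbar (M ∩ b) * Tbar (M ∩ a)) * T (s \ M)) = 0 := by
      subst hab
      rw [← Finset.sum_nbij' (i := fun (p : Finset ι × Finset ι) => p.2 ∪ p.1)
        (j := fun M => (M ∩ b, M ∩ a)) (s := b.powerset ×ˢ a.powerset)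
        (f := fun p => (-1 : R) ^ (p.2 ∪ p.1).card *
          ((Tbar ((p.2 ∪ p.1) ∩ b) * Tbar ((p.2 ∪ p.1) ∩ a)) *
            T ((a ∪ b) \ (p.2 ∪ p.1))))]
      · -- evaluate the double sum
        rw [Finset.sum_product]
        have step : ∀ Mb ∈ b.powerset,
            (∑ Ma ∈ a.powerset, (-1 : R) ^ (Ma ∪ Mb).card *
              ((Tbar ((Ma ∪ Mb) ∩ b) * Tbar ((Ma ∪ Mb) ∩ a)) *
                T ((a ∪ b) \ (Ma ∪ Mb)))) =
            (((-1 : R) ^ Mb.card * Tbar Mb) *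
              ∑ Ma ∈ a.powerset, (-1 : R) ^ Ma.card * (Tbar Ma * T (a \ Ma))) *
              T (b \ Mb) := by
          intro Mb hMb
          rw [Finset.mem_powerset] at hMb
          rw [Finset.mul_sum, Finset.sum_mul]
          refine Finset.sum_congr rfl fun Ma hMa => ?_
          rw [Finset.mem_powerset] at hMa
          have hMab : Disjoint Ma Mb := hdab.mono hMa hMb
          have hsubMa : ∀ i, i ∈ Ma → i ∈ a := fun i hi => hMa hi
          have hsubMb : ∀ i, i ∈ Mb → i ∈ b := fun i hi => hMb hi
          have hdab' : ∀ i, i ∈ a → i ∈ b → False := fun i hia hib =>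
            Finset.disjoint_left.mp hdab hia hib
          have h1 : (Ma ∪ Mb) ∩ b = Mb := by
            ext i
            simp only [Finset.mem_inter, Finset.mem_union]
            constructor
            · rintro ⟨h | h, hib⟩
              · exact absurd (hdab' i (hsubMa i h) hib) (by tauto)
              · exact h
            · exact fun h => ⟨Or.inr h, hsubMb i h⟩
          have h2 : (Ma ∪ Mb) ∩ a = Ma := by
            ext i
            simp only [Finset.mem_inter, Finset.mem_union]
            constructor
            · rintro ⟨h | h, hia⟩
              · exact h
              · exact absurd (hdab' i hia (hsubMb i h)) (by tauto)
            · exact fun h => ⟨Or.inl h, hsubMa i h⟩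
          have h3 : (a ∪ b) \ (Ma ∪ Mb) = (a \ Ma) ∪ (b \ Mb) := by
            ext i
            simp only [Finset.mem_sdiff, Finset.mem_union]
            constructor
            · rintro ⟨h | h, hn⟩
              · exact Or.inl ⟨h, fun hi => hn (Or.inl hi)⟩
              · exact Or.inr ⟨h, fun hi => hn (Or.inr hi)⟩
            · rintro (⟨hia, hna⟩ | ⟨hib, hnb⟩)
              · refine ⟨Or.inl hia, ?_⟩
                rintro (h | h)
                · exact hna h
                · exact hdab' i hia (hsubMb i h)
              · refine ⟨Or.inr hib, ?_⟩
                rintro (h | h)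
                · exact hdab' i (hsubMa i h) hib
                · exact hnb h
          have hdsd : Disjoint (a \ Ma) (b \ Mb) :=
            hdab.mono (Finset.sdiff_subset) (Finset.sdiff_subset)
          have hcs : ∀ i ∈ a \ Ma, ∀ j ∈ b \ Mb, x i - x j ∉ backwardCone := by
            intro i hi j hj
            exact hc i (ha (Finset.mem_sdiff.mp hi).1) j (hb (Finset.mem_sdiff.mp hj).1)
          have h4 : T ((a ∪ b) \ (Ma ∪ Mb)) = T (a \ Ma) * T (b \ Mb) := by
            rw [h3]; exact hcaus _ _ hdsd hcs
          rw [h1, h2, h4, Finset.card_union_of_disjoint hMab, pow_add]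
          -- rearrange
          simp only [mul_assoc]
          rw [neg_one_pow_left_comm Ma.card (Tbar Mb),
            neg_one_pow_left_comm Ma.card ((-1 : R) ^ Mb.card)]
        rw [Finset.sum_congr rfl step]
        rw [conv_delta T Tbar hT hTbar hinv1 a]
        rcases eq_or_ne a ∅ with hae | hae
        · have hbe : b ≠ ∅ := by
            intro hbe
            exact hs (by rw [hae, hbe]; simp)
          rw [if_pos hae]
          have : ∀ Mb ∈ b.powerset,
              (((-1 : R) ^ Mb.card * Tbar Mb) * 1) * T (b \ Mb) =
              (-1 : R) ^ Mb.card * (Tbar Mb * T (b \ Mb)) := by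
            intro Mb _
            rw [mul_one, mul_assoc]
          rw [Finset.sum_congr rfl this, conv_delta T Tbar hT hTbar hinv1 b, if_neg hbe]
        · rw [if_neg hae]
          simp
      · intro p hp
        simp only [Finset.mem_product, Finset.mem_powerset] at hp
        rw [Finset.mem_powerset]
        exact Finset.union_subset (hp.2.trans Finset.subset_union_left)
          (hp.1.trans Finset.subset_union_right)
      · intro M hM
        rw [Finset.mem_powerset] at hM
        simp only [Finset.mem_product, Finset.mem_powerset]
        exact ⟨Finset.inter_subset_right, Finset.inter_subset_right⟩
      · intro p hp
        simp only [Finset.mem_product, Finset.mem_powerset] at hp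
        obtain ⟨hp1, hp2⟩ := hp
        have h1 : (p.2 ∪ p.1) ∩ b = p.1 := by
          rw [Finset.union_inter_distrib_right, Finset.inter_eq_left.mpr hp1,
            Finset.disjoint_iff_inter_eq_empty.mp (hdab.mono hp2 le_rfl),
            Finset.empty_union]
        have h2 : (p.2 ∪ p.1) ∩ a = p.2 := by
          rw [Finset.union_inter_distrib_right, Finset.inter_eq_left.mpr hp2,
            Finset.disjoint_iff_inter_eq_empty.mp (hdab.symm.mono hp1 le_rfl),
            Finset.union_empty]
        simp only [h1, h2]
      · intro M hM
        rw [Finset.mem_powerset] at hM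
        simp only
        rw [← Finset.inter_union_distrib_left]
        exact Finset.inter_eq_left.mpr hM
      · intro p hp
        rfl
    -- combine `hinv1 s` with `key`
    have h1 := hinv1 s hne
    have hdiff : ∑ M ∈ s.powerset,
        ((-1 : R) ^ M.card * (Tbar M * T (s \ M)) -
          (-1 : R) ^ M.card * ((Tbar (M ∩ b) * Tbar (M ∩ a)) * T (s \ M))) = 0 := by
      rw [Finset.sum_sub_distrib, h1, key, sub_zero]
    have hzero : ∀ M ∈ s.powerset, M ≠ s →
        (-1 : R) ^ M.card * (Tbar M * T (s \ M)) -
          (-1 : R) ^ M.card * ((Tbar (M ∩ b) * Tbar (M ∩ a)) * T (s \ M)) = 0 := by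
      intro M hM hMs
      rw [Finset.mem_powerset] at hM
      have hMss : M ⊂ s := Finset.ssubset_iff_subset_ne.mpr ⟨hM, hMs⟩
      have hMunion : (M ∩ a) ∪ (M ∩ b) = M := by
        rw [← Finset.inter_union_distrib_left, hab]
        exact Finset.inter_eq_left.mpr hM
      have := IH M hMss (M ∩ a) (M ∩ b)
        ((Finset.inter_subset_right).trans ha)
        ((Finset.inter_subset_right).trans hb) hMunion
      rw [this, sub_self]
    rw [Finset.sum_eq_single_of_mem s (Finset.mem_powerset_self s) hzero] at hdiff
    have hsa : s ∩ a = a := Finset.inter_eq_right.mpr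
      (by rw [← hab]; exact Finset.subset_union_left)
    have hsb : s ∩ b = b := Finset.inter_eq_right.mpr
      (by rw [← hab]; exact Finset.subset_union_right)
    rw [Finset.sdiff_self, hT, hsa, hsb, mul_one, mul_one, ← mul_sub] at hdiff
    exact sub_eq_zero.mp (neg_one_pow_mul_eq_zero_iff.mp hdiff)
end

section
/- Let R be a ring, σ : R → R a ring homomorphism, ι a type, and x : ι → ℝ⁴ an assignment of spacetime points. Let T, T̄ : Finset ι → R (interpreted as chronological products at the points x, and antichronological products of the PCT-conjugated arguments at the points −x, respectively). Assume: (i) T factorizes causally, i.e. T(s₁ ∪ s₂) = T(s₁) * T(s₂) for all disjoint finite s₁, s₂ with x(i) − x(j) ∉ V̄₋ for all i ∈ s₁, j ∈ s₂; (ii) T̄ factorizes antichronologically with respect to the reflected points −x, i.e. T̄(s₁ ∪ s₂) = T̄(s₂) * T̄(s₁) for all disjoint finite s₁, s₂ with (−x(i)) − (−x(j)) ∉ V̄₋ for all i ∈ s₁, j ∈ s₂; (iii) PCT covariance holds at lower orders: σ(T(M)) = T̄(M) for every finite M ⊆ ι with |M| < n. Then for every finite s ⊆ ι with |s| = n which admits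 a splitting s = s₁ ∪ s₂ into disjoint nonempty sets with x(i) − x(j) ∉ V̄₋ for all i ∈ s₁, j ∈ s₂, one has σ(T(s)) = T̄(s). -/
open Finset

/-- **PCT covariance can be violated only on the total diagonal.** If `T`
factorizes causally at the points `x`, `Tbar` (the antichronological products of
the PCT-conjugated arguments) factorizes antichronologically at the reflected
points `-x`, and PCT covariance `σ (T M) = Tbar M` holds at all orders `< n`,
then `σ (T s) = Tbar s` for every `s` of cardinality `n` admitting a causal
splitting into two nonempty parts. -/
theorem pct_covariance_off_diagonal
    {R : Type*} {ι : Type*} [Ring R] [DecidableEq ι]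
    (σ : R →+* R) (x : ι → (Fin 4 → ℝ)) (T Tbar : Finset ι → R) (n : ℕ)
    (hcaus : ∀ s₁ s₂ : Finset ι, Disjoint s₁ s₂ →
      (∀ i ∈ s₁, ∀ j ∈ s₂, x i - x j ∉ backwardCone) →
      T (s₁ ∪ s₂) = T s₁ * T s₂)
    (hanticaus : ∀ s₁ s₂ : Finset ι, Disjoint s₁ s₂ →
      (∀ i ∈ s₁, ∀ j ∈ s₂, (-(x i)) - (-(x j)) ∉ backwardCone) →
      Tbar (s₁ ∪ s₂) = Tbar s₂ * Tbar s₁)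
    (hlower : ∀ M : Finset ι, M.card < n → σ (T M) = Tbar M) :
    ∀ s : Finset ι, s.card = n →
      (∃ s₁ s₂ : Finset ι, Disjoint s₁ s₂ ∧ s₁.Nonempty ∧ s₂.Nonempty ∧
        s = s₁ ∪ s₂ ∧ ∀ i ∈ s₁, ∀ j ∈ s₂, x i - x j ∉ backwardCone) →
      σ (T s) = Tbar s := by
  rintro s hcard ⟨s₁, s₂, hdisj, hne₁, hne₂, hs, hsep⟩
  have hcards : s₁.card + s₂.card = n := by
    rw [← hcard, hs, card_union_of_disjoint hdisj]
  have h₁ : s₁.card < n := by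
    have := card_pos.mpr hne₂; omega
  have h₂ : s₂.card < n := by
    have := card_pos.mpr hne₁; omega
  have hT : T s = T s₁ * T s₂ := by rw [hs]; exact hcaus s₁ s₂ hdisj hsep
  have hTbar : Tbar s = Tbar s₁ * Tbar s₂ := by
    rw [hs, union_comm]
    exact hanticaus s₂ s₁ hdisj.symm (fun i hi j hj => by
      have := hsep j hj i hi
      simpa [sub_eq_add_neg, add_comm] using this)
  rw [hT, hTbar, map_mul, hlower s₁ h₁, hlower s₂ h₂]
end

section
/- Let N ≥ 1, let R be a ℚ-algebra (so that division by 2N is available), σ : R ≃ R a ring automorphism, ι a type, ρ : ι ≃ ι a bijection, and n : ι → ℕ a function with n(ρ(a)) = n(a) for all a. Let T, T̄ : ι → R satisfy, for every a ∈ ι, the exchange identities σ(T̄(a) + (−1)^{n(a)} T(a)) = T(ρ(a)) + (−1)^{n(a)} T̄(ρ(a)) and σ(T(a) + (−1)^{n(a)} T̄(a)) = T̄(ρ(a)) + (−1)^{n(a)} T(ρ(a)). Define the symmetrized families T^sym(a) := (2N)⁻¹ Σ_{l=0}^{N−1} ( σ^{2l}(T(ρ^{−2l}(a))) + σ^{2l+1}(T̄(ρ^{−(2l+1)}(a)))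 ) and T̄^sym(a) := (2N)⁻¹ Σ_{l=0}^{N−1} ( σ^{2l}(T̄(ρ^{−2l}(a))) + σ^{2l+1}(T(ρ^{−(2l+1)}(a))) ). Then for every a ∈ ι: T^sym(a) + (−1)^{n(a)} T̄^sym(a) = T(a) + (−1)^{n(a)} T̄(a). -/
/-- The symmetrization `T^sym(a) = (2N)⁻¹ Σ_{l=0}^{N−1} ( σ^{2l}(T(ρ^{−2l}(a)))
+ σ^{2l+1}(T'(ρ^{−(2l+1)}(a))) )` of a family `T` (with partner family `T'`)
over the finite group generated by the PCT operator. The corresponding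
antichronological symmetrization `T̄^sym` is `pctSym N σ ρ T' T`. -/
def pctSym {R : Type*} {ι : Type*} [Ring R] [Algebra ℚ R]
    (N : ℕ) (σ : R ≃+* R) (ρ : ι ≃ ι) (T T' : ι → R) (a : ι) : R :=
  (2 * N : ℚ)⁻¹ • ∑ l ∈ Finset.range N,
    ((⇑σ)^[2 * l] (T ((⇑ρ.symm)^[2 * l] a)) +
      (⇑σ)^[2 * l + 1] (T' ((⇑ρ.symm)^[2 * l + 1] a)))

/-- **The symmetrization does not change `T + (−1)ⁿ T̄`.** Under the exchange
identities for `σ` and `ρ`, the symmetrized chronological and antichronological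
families satisfy `T^sym(a) + (−1)^{n(a)} T̄^sym(a) = T(a) + (−1)^{n(a)} T̄(a)`. -/
theorem pctSym_preserves_sum
    {R : Type*} {ι : Type*} [Ring R] [Algebra ℚ R]
    (N : ℕ) (hN : 1 ≤ N) (σ : R ≃+* R) (ρ : ι ≃ ι)
    (n : ι → ℕ) (hn : ∀ a, n (ρ a) = n a)
    (T Tbar : ι → R)
    (h1 : ∀ a, σ (Tbar a + (-1 : R) ^ n a * T a)
      = T (ρ a) + (-1 : R) ^ n a * Tbar (ρ a))
    (h2 : ∀ a, σ (T a + (-1 : R) ^ n a * Tbar a)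
      = Tbar (ρ a) + (-1 : R) ^ n a * T (ρ a)) :
    ∀ a, pctSym N σ ρ T Tbar a + (-1 : R) ^ n a * pctSym N σ ρ Tbar T a
      = T a + (-1 : R) ^ n a * Tbar a := by
  intro a
  set S : ι → R := fun b => T b + (-1 : R) ^ n b * Tbar b with hS
  set S' : ι → R := fun b => Tbar b + (-1 : R) ^ n b * T b with hS'
  have hn' : ∀ b, n (ρ.symm b) = n b := by
    intro b
    have := hn (ρ.symm b)
    rw [ρ.apply_symm_apply] at this
    exact this.symm
  have hniter : ∀ k b, n ((⇑ρ.symm)^[k] b) = n b := by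
    intro k
    induction k with
    | zero => intro b; rfl
    | succ k ih => intro b; rw [Function.iterate_succ_apply, ih, hn']
  have hsig : ∀ (k m : ℕ) (x : R),
      (⇑σ)^[k] ((-1 : R) ^ m * x) = (-1 : R) ^ m * (⇑σ)^[k] x := by
    intro k
    induction k with
    | zero => intro m x; rfl
    | succ k ih =>
      intro m x
      rw [Function.iterate_succ_apply, map_mul, map_pow, map_neg, map_one, ih,
        ← Function.iterate_succ_apply]
  have hσS : ∀ b, σ (S b) = S' (ρ b) := by
    intro b; simp only [hS, hS', h2 b, hn b]
  have hσS' : ∀ b, σ (S' b) = S (ρ b) := by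
    intro b; simp only [hS, hS', h1 b, hn b]
  have hstep2 : ∀ c, (⇑σ)^[2] (S ((⇑ρ.symm)^[2] c)) = S c := by
    intro c
    have e : (⇑ρ.symm)^[2] c = ρ.symm (ρ.symm c) := by
      simp [Function.iterate_succ_apply]
    have e2 : ∀ x : R, (⇑σ)^[2] x = σ (σ x) := by
      intro x; simp [Function.iterate_succ_apply]
    rw [e, e2, hσS, ρ.apply_symm_apply, hσS', ρ.apply_symm_apply]
  have hA : ∀ k b, (⇑σ)^[2 * k] (S ((⇑ρ.symm)^[2 * k] b)) = S b := by
    intro k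
    induction k with
    | zero => intro b; rfl
    | succ k ih =>
      intro b
      have e1 : 2 * (k + 1) = 2 * k + 2 := by ring
      have e2 : (⇑σ)^[2 * k + 2] (S ((⇑ρ.symm)^[2 * k + 2] b))
          = (⇑σ)^[2 * k] ((⇑σ)^[2] (S ((⇑ρ.symm)^[2] ((⇑ρ.symm)^[2 * k] b)))) := by
        rw [Function.iterate_add_apply (⇑σ) (2 * k) 2,
          ← Function.iterate_add_apply (⇑ρ.symm) 2 (2 * k), Nat.add_comm 2 (2 * k)]
      rw [e1, e2, hstep2, ih]
  have hB : ∀ k b, (⇑σ)^[2 * k + 1] (S' ((⇑ρ.symm)^[2 * k + 1] b)) = S b := by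
    intro k b
    rw [Function.iterate_succ_apply (⇑σ) (2 * k),
      Function.iterate_succ_apply' (⇑ρ.symm) (2 * k),
      hσS', ρ.apply_symm_apply, hA]
  have hadd : ∀ (k : ℕ) (x y : R),
      (⇑σ)^[k] (x + y) = (⇑σ)^[k] x + (⇑σ)^[k] y := by
    intro k
    induction k with
    | zero => intro x y; rfl
    | succ k ih =>
      intro x y
      rw [Function.iterate_succ_apply, map_add, ih, ← Function.iterate_succ_apply,
        ← Function.iterate_succ_apply]
  have hterm : ∀ l,
      ((⇑σ)^[2 * l] (T ((⇑ρ.symm)^[2 * l] a)) +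
        (⇑σ)^[2 * l + 1] (Tbar ((⇑ρ.symm)^[2 * l + 1] a))) +
      (-1 : R) ^ n a *
      ((⇑σ)^[2 * l] (Tbar ((⇑ρ.symm)^[2 * l] a)) +
        (⇑σ)^[2 * l + 1] (T ((⇑ρ.symm)^[2 * l + 1] a)))
      = S a + S a := by
    intro l
    have eA := hA l a
    have eB := hB l a
    simp only [hS, hS', hniter] at eA eB
    rw [hadd, hsig] at eA
    rw [hadd, hsig] at eB
    rw [mul_add, add_add_add_comm, eA, eB]
  show (2 * N : ℚ)⁻¹ • _ + (-1 : R) ^ n a * ((2 * N : ℚ)⁻¹ • _) = S a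
  rw [mul_smul_comm, ← smul_add, Finset.mul_sum, ← Finset.sum_add_distrib]
  rw [Finset.sum_congr rfl (fun l _ => hterm l), Finset.sum_const,
    Finset.card_range]
  have hx : ∀ x : R, N • (x + x) = (((2 * N : ℕ) : ℚ)) • x := by
    intro x
    rw [← two_smul ℕ x, smul_smul, Nat.cast_smul_eq_nsmul ℚ, Nat.mul_comm]
  rw [hx, smul_smul]
  have h2N : (2 * (N : ℚ)) ≠ 0 := by
    have : (N : ℚ) ≠ 0 := Nat.cast_ne_zero.mpr (by omega)
    positivity
  rw [show ((2 * N : ℕ) : ℚ) = 2 * (N : ℚ) by push_cast; ring,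
    inv_mul_cancel₀ h2N, one_smul]
end

section
/- Let N ≥ 1, let R be a ℚ-algebra, σ : R ≃ R a ring automorphism with σ^{2N} = id, ι a type, and ρ : ι ≃ ι a bijection with ρ^{2N} = id. Given any T, T̄ : ι → R, define T^sym(a) := (2N)⁻¹ Σ_{l=0}^{N−1} ( σ^{2l}(T(ρ^{−2l}(a))) + σ^{2l+1}(T̄(ρ^{−(2l+1)}(a))) ) and T̄^sym(a) := (2N)⁻¹ Σ_{l=0}^{N−1} ( σ^{2l}(T̄(ρ^{−2l}(a))) + σ^{2l+1}(T(ρ^{−(2l+1)}(a))) ). Then for every a ∈ ι: σ(T^sym(a)) = T̄^sym(ρ(a)) and σ(T̄^sym(a)) = T^sym(ρ(a)). -/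
private lemma pctSym_key {R : Type*} {ι : Type*} [Ring R] [Algebra ℚ R]
    (N : ℕ) (hN : 1 ≤ N) (σ : R ≃+* R) (hσ : ∀ r, (⇑σ)^[2 * N] r = r)
    (ρ : ι ≃ ι) (hρ : ∀ a, (⇑ρ)^[2 * N] a = a)
    (T T' : ι → R) (a : ι) :
    σ (pctSym N σ ρ T T' a) = pctSym N σ ρ T' T (ρ a) := by
  obtain ⟨n, rfl⟩ : ∃ n, N = n + 1 := ⟨N - 1, (Nat.succ_pred_eq_of_pos hN).symm⟩
  have hρsymm : ∀ b, (⇑ρ.symm)^[2 * (n + 1)] b = b := fun b => by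
    conv_lhs => rw [← hρ b]
    exact (ρ.left_inv.iterate (2 * (n + 1))) b
  have hstep : ∀ (k : ℕ) (b : ι), (⇑ρ.symm)^[k + 1] (ρ b) = (⇑ρ.symm)^[k] b := fun k b => by
    rw [Function.iterate_succ_apply, Equiv.symm_apply_apply]
  have h1 : (⇑ρ.symm)^[2 * n + 1] a = ρ a := by
    have h2 := hρsymm a
    rw [show 2 * (n + 1) = (2 * n + 1) + 1 from by ring,
      Function.iterate_succ_apply' ρ.symm] at h2
    exact (Equiv.symm_apply_eq ρ).mp h2
  have key : ∑ l ∈ Finset.range (n + 1),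
      ((⇑σ)^[2 * l + 1] (T ((⇑ρ.symm)^[2 * l] a)) +
        (⇑σ)^[2 * l + 1 + 1] (T' ((⇑ρ.symm)^[2 * l + 1] a)))
      = ∑ l ∈ Finset.range (n + 1),
      ((⇑σ)^[2 * l] (T' ((⇑ρ.symm)^[2 * l] (ρ a))) +
        (⇑σ)^[2 * l + 1] (T ((⇑ρ.symm)^[2 * l + 1] (ρ a)))) := by
    rw [Finset.sum_add_distrib, Finset.sum_add_distrib]
    have eA : ∑ l ∈ Finset.range (n + 1), (⇑σ)^[2 * l + 1] (T ((⇑ρ.symm)^[2 * l] a))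
        = ∑ l ∈ Finset.range (n + 1), (⇑σ)^[2 * l + 1] (T ((⇑ρ.symm)^[2 * l + 1] (ρ a))) := by
      refine Finset.sum_congr rfl fun l _ => ?_
      rw [hstep (2 * l) a]
    have eB : ∑ l ∈ Finset.range (n + 1), (⇑σ)^[2 * l + 1 + 1] (T' ((⇑ρ.symm)^[2 * l + 1] a))
        = ∑ l ∈ Finset.range (n + 1), (⇑σ)^[2 * l] (T' ((⇑ρ.symm)^[2 * l] (ρ a))) := by
      rw [Finset.sum_range_succ, Finset.sum_range_succ']
      congr 1
      · refine Finset.sum_congr rfl fun l _ => ?_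
        rw [show 2 * (l + 1) = (2 * l + 1) + 1 from by ring, hstep (2 * l + 1) a]
      · have h5 : 2 * n + 1 + 1 = 2 * (n + 1) := by ring
        simp only [h5, h1, hσ, mul_zero, Function.iterate_zero_apply]
    rw [eA, eB, add_comm]
  unfold pctSym
  rw [map_rat_smul, map_sum]
  simp only [map_add, ← Function.iterate_succ_apply' σ]
  rw [key]

/-- **PCT covariance of the symmetrized products.** If `σ^{2N} = id` and
`ρ^{2N} = id`, then for any families `T, T̄` the symmetrizations satisfy
`σ(T^sym(a)) = T̄^sym(ρ(a))` and `σ(T̄^sym(a)) = T^sym(ρ(a))`. -/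
theorem pctSym_covariant
    {R : Type*} {ι : Type*} [Ring R] [Algebra ℚ R]
    (N : ℕ) (hN : 1 ≤ N) (σ : R ≃+* R) (hσ : ∀ r, (⇑σ)^[2 * N] r = r)
    (ρ : ι ≃ ι) (hρ : ∀ a, (⇑ρ)^[2 * N] a = a)
    (T Tbar : ι → R) :
    ∀ a, σ (pctSym N σ ρ T Tbar a) = pctSym N σ ρ Tbar T (ρ a) ∧
      σ (pctSym N σ ρ Tbar T a) = pctSym N σ ρ T Tbar (ρ a) := by
  intro a
  exact ⟨pctSym_key N hN σ hσ ρ hρ T Tbar a, pctSym_key N hN σ hσ ρ hρ Tbar T a⟩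
end

section
/- Let V be a module over ℂ and φ : ℝ⁴ → End_ℂ(V) a (possibly interacting scalar) field. Let L₊↑ be the restricted Lorentz group, acting on ℝ⁴ by matrix-vector multiplication, and let U : L₊↑ → (End_ℂ(V))ˣ be a group homomorphism such that φ(Λ·x) = U(Λ) ∘ φ(x) ∘ U(Λ)⁻¹ for all Λ ∈ L₊↑ and x ∈ ℝ⁴. Suppose there is a map T : ℝ⁴ → ℝ⁴ → End_ℂ(V) such that: (i) T(x,y) = φ(x) ∘ φ(y) whenever x₀ > y₀; (ii) T(x,y) = φ(y) ∘ φ(x) whenever y₀ > x₀; (iii) T(Λ·x, Λ·y) = U(Λ) ∘ T(x,y) ∘ U(Λ)⁻¹ for all Λ ∈ L₊↑ and all x ≠ y. Then local commutativity holds: for all x, y ∈ ℝ⁴ with x − y spacelike (Q(x−y) < 0), φ(x) ∘ φ(y) = φ(y) ∘ φ(x). -/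
/-- The Minkowski metric matrix `G = diag(1, −1, −1, −1)`. -/
def minkMetric : Matrix (Fin 4) (Fin 4) ℝ := Matrix.diagonal ![1, -1, -1, -1]

/-- A matrix belongs to the restricted Lorentz group `L₊↑` if `Λᵀ G Λ = G`,
`det Λ = 1` and `Λ₀₀ ≥ 1`. -/
def IsRestrictedLorentz (Λ : Matrix (Fin 4) (Fin 4) ℝ) : Prop :=
  Λ.transpose * minkMetric * Λ = minkMetric ∧ Λ.det = 1 ∧ 1 ≤ Λ 0 0

/-!
If `x - y` is spacelike, boosting along the spatial part of `x - y` with suitable velocities yields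
one frame in which `x` is later than `y` and another in which it is earlier. Covariance of `φ` and
of `T` carries the two defining formulas for `T` back to the original frame, so
`T x y = φ x * φ y` and `T x y = φ y * φ x`.
-/

theorem Qmink_neg (z : Fin 4 → ℝ) : Qmink (-z) = Qmink z := by
  simp [Qmink]

/-- The pure boost along the unit direction `(n₁, n₂, n₃)` with `γ = cosh η`, `b = sinh η`. -/
def boost (γ b n₁ n₂ n₃ : ℝ) : Matrix (Fin 4) (Fin 4) ℝ :=
  !![γ, -b * n₁, -b * n₂, -b * n₃;
     -b * n₁, 1 + (γ - 1) * n₁ ^ 2, (γ - 1) * n₁ * n₂, (γ - 1) * n₁ * n₃;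
     -b * n₂, (γ - 1) * n₁ * n₂, 1 + (γ - 1) * n₂ ^ 2, (γ - 1) * n₂ * n₃;
     -b * n₃, (γ - 1) * n₁ * n₃, (γ - 1) * n₂ * n₃, 1 + (γ - 1) * n₃ ^ 2]

theorem isRestrictedLorentz_boost {γ b n₁ n₂ n₃ : ℝ} (hγ : γ ^ 2 = b ^ 2 + 1) (hγ₁ : 1 ≤ γ)
    (hn : n₁ ^ 2 + n₂ ^ 2 + n₃ ^ 2 = 1) : IsRestrictedLorentz (boost γ b n₁ n₂ n₃) := by
  refine ⟨?_, ?_, by simpa [boost] using hγ₁⟩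
  · ext i j
    fin_cases i <;> fin_cases j <;>
      simp [boost, minkMetric, Matrix.mul_apply, Fin.sum_univ_four, Matrix.diagonal] <;> grind
  · rw [Matrix.det_succ_row_zero]
    simp [boost, Fin.sum_univ_succ, Matrix.det_fin_three, Fin.succAbove]
    grind

theorem boost_mulVec_zero (γ b n₁ n₂ n₃ : ℝ) (z : Fin 4 → ℝ) :
    (boost γ b n₁ n₂ n₃).mulVec z 0 = γ * z 0 - b * (n₁ * z 1 + n₂ * z 2 + n₃ * z 3) := by
  simp only [Matrix.mulVec, dotProduct, boost, Fin.sum_univ_four, Matrix.of_apply, Matrix.cons_val',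
    Matrix.cons_val_fin_one, Matrix.cons_val_zero, Matrix.cons_val_one, Matrix.cons_val]
  ring

theorem exists_boost_parameters {w s : ℝ} (h : |w| < s) :
    ∃ γ b : ℝ, γ ^ 2 = b ^ 2 + 1 ∧ 1 ≤ γ ∧ 0 < γ * w - b * s := by
  have hs : 0 < s := (abs_nonneg w).trans_lt h
  have hws : |w / s| < 1 := by rwa [abs_div, abs_of_pos hs, div_lt_one hs]
  -- a velocity strictly between `-1` and `w / s`, so that `w - v * s > 0`
  set v := (w / s - 1) / 2 with hv_def
  have hv : v ^ 2 < 1 := by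
    rw [sq_lt_one_iff_abs_lt_one, abs_lt]
    constructor <;> linarith [abs_lt.1 hws, hv_def]
  set c := √(1 - v ^ 2)
  have hc : 0 < c := Real.sqrt_pos.2 (by linarith)
  have hc_sq : c ^ 2 = 1 - v ^ 2 := Real.sq_sqrt (by linarith)
  refine ⟨c⁻¹, c⁻¹ * v, ?_, ?_, ?_⟩
  · field_simp
    linarith
  · rw [one_le_inv₀ hc]
    exact Real.sqrt_le_one.mpr (by nlinarith)
  · have hvs : w - v * s = (w + s) / 2 := by rw [hv_def]; field_simp; ring
    rw [mul_assoc, ← mul_sub, hvs]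
    exact mul_pos (inv_pos.2 hc) (by linarith [neg_abs_le w])

theorem exists_isRestrictedLorentz_mulVec_zero_pos {z : Fin 4 → ℝ} (hz : Qmink z < 0) :
    ∃ Λ, IsRestrictedLorentz Λ ∧ 0 < Λ.mulVec z 0 := by
  set s := √(z 1 ^ 2 + z 2 ^ 2 + z 3 ^ 2)
  have hzs : |z 0| < s :=
    (Real.lt_sqrt (abs_nonneg _)).2 (by rw [sq_abs]; unfold Qmink at hz; linarith)
  have hs : 0 < s := (abs_nonneg _).trans_lt hzs
  have hs_sq : s ^ 2 = z 1 ^ 2 + z 2 ^ 2 + z 3 ^ 2 := Real.sq_sqrt (by positivity)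
  obtain ⟨γ, b, hγ, hγ₁, hpos⟩ := exists_boost_parameters hzs
  refine ⟨boost γ b (z 1 / s) (z 2 / s) (z 3 / s), isRestrictedLorentz_boost hγ hγ₁ ?_, ?_⟩
  · field_simp
    exact hs_sq.symm
  · have hdir : z 1 / s * z 1 + z 2 / s * z 2 + z 3 / s * z 3 = s := by
      field_simp
      exact hs_sq.symm
    rwa [boost_mulVec_zero, hdir]

theorem Units.eq_mul_of_conj {M : Type*} [Monoid M] (u : Mˣ) {t a b : M}
    (h : ↑u * t * ↑u⁻¹ = ↑u * a * ↑u⁻¹ * (↑u * b * ↑u⁻¹)) : t = a * b := by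
  simp only [mul_assoc, Units.inv_mul_cancel_left, Units.mul_right_inj] at h
  rwa [← mul_assoc, Units.mul_left_inj] at h

theorem local_commutativity_of_lorentz_covariance_general
    {V : Type*} [AddCommGroup V] [Module ℂ V]
    (φ : (Fin 4 → ℝ) → Module.End ℂ V)
    (U : Matrix (Fin 4) (Fin 4) ℝ → (Module.End ℂ V)ˣ)
    (hφcov : ∀ Λ : Matrix (Fin 4) (Fin 4) ℝ, IsRestrictedLorentz Λ →
      ∀ x : Fin 4 → ℝ, φ (Λ.mulVec x) = ↑(U Λ) * φ x * ↑(U Λ)⁻¹)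
    (T : (Fin 4 → ℝ) → (Fin 4 → ℝ) → Module.End ℂ V)
    (hT₁ : ∀ x y : Fin 4 → ℝ, y 0 < x 0 → T x y = φ x * φ y)
    (hT₂ : ∀ x y : Fin 4 → ℝ, x 0 < y 0 → T x y = φ y * φ x)
    (hTcov : ∀ Λ : Matrix (Fin 4) (Fin 4) ℝ, IsRestrictedLorentz Λ →
      ∀ x y : Fin 4 → ℝ, x ≠ y →
        T (Λ.mulVec x) (Λ.mulVec y) = ↑(U Λ) * T x y * ↑(U Λ)⁻¹) :
    ∀ x y : Fin 4 → ℝ, Qmink (x - y) < 0 → φ x * φ y = φ y * φ x := by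
  intro x y hxy
  have hne : x ≠ y := by
    rintro rfl
    simp [Qmink] at hxy
  obtain ⟨Λ, hΛ, hx_later⟩ := exists_isRestrictedLorentz_mulVec_zero_pos hxy
  obtain ⟨Λ', hΛ', hy_later⟩ :=
    exists_isRestrictedLorentz_mulVec_zero_pos (z := y - x) (by rwa [← neg_sub, Qmink_neg])
  have h_xy : T x y = φ x * φ y := by
    have h := hT₁ (Λ.mulVec x) (Λ.mulVec y) (by simpa [Matrix.mulVec_sub] using hx_later)
    rw [hTcov Λ hΛ x y hne, hφcov Λ hΛ, hφcov Λ hΛ] at h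
    exact (U Λ).eq_mul_of_conj h
  have h_yx : T x y = φ y * φ x := by
    have h := hT₂ (Λ'.mulVec x) (Λ'.mulVec y) (by simpa [Matrix.mulVec_sub] using hy_later)
    rw [hTcov Λ' hΛ' x y hne, hφcov Λ' hΛ', hφcov Λ' hΛ'] at h
    exact (U Λ').eq_mul_of_conj h
  rw [← h_xy, h_yx]

/-- **From Lorentz covariance of the field and of its time-ordered product to
local commutativity.** If `φ(Λ·x) = U(Λ) φ(x) U(Λ)⁻¹` for a (multiplicative on
`L₊↑`) family of invertible operators `U`, and `T` is a Lorentz-covariant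
time-ordered product agreeing with `φ(x)φ(y)` for `x₀ > y₀` and with `φ(y)φ(x)`
for `y₀ > x₀`, then `φ(x)` and `φ(y)` commute at spacelike separation. -/
theorem local_commutativity_of_lorentz_covariance
    {V : Type*} [AddCommGroup V] [Module ℂ V]
    (φ : (Fin 4 → ℝ) → Module.End ℂ V)
    (U : Matrix (Fin 4) (Fin 4) ℝ → (Module.End ℂ V)ˣ)
    (hU1 : U 1 = 1)
    (hUmul : ∀ Λ₁ Λ₂ : Matrix (Fin 4) (Fin 4) ℝ,
      IsRestrictedLorentz Λ₁ → IsRestrictedLorentz Λ₂ → U (Λ₁ * Λ₂) = U Λ₁ * U Λ₂)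
    (hφcov : ∀ Λ : Matrix (Fin 4) (Fin 4) ℝ, IsRestrictedLorentz Λ →
      ∀ x : Fin 4 → ℝ, φ (Λ.mulVec x) = ↑(U Λ) * φ x * ↑(U Λ)⁻¹)
    (T : (Fin 4 → ℝ) → (Fin 4 → ℝ) → Module.End ℂ V)
    (hT₁ : ∀ x y : Fin 4 → ℝ, y 0 < x 0 → T x y = φ x * φ y)
    (hT₂ : ∀ x y : Fin 4 → ℝ, x 0 < y 0 → T x y = φ y * φ x)
    (hTcov : ∀ Λ : Matrix (Fin 4) (Fin 4) ℝ, IsRestrictedLorentz Λ →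
      ∀ x y : Fin 4 → ℝ, x ≠ y →
        T (Λ.mulVec x) (Λ.mulVec y) = ↑(U Λ) * T x y * ↑(U Λ)⁻¹) :
    ∀ x y : Fin 4 → ℝ, Qmink (x - y) < 0 → φ x * φ y = φ y * φ x :=
  local_commutativity_of_lorentz_covariance_general φ U hφcov T hT₁ hT₂ hTcov
end
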